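/- Let V be a complex vector space of dimension d ≥ 7 with a nondegenerate symmetric bilinear form B. For i = 1, 2 let Lᵢ ⊆ V be a two-dimensional subspace on which B restricts nondegenerately, and let uᵢ ∈ Lᵢ^⊥ be a nonzero isotropic vector; set Wᵢ = (Lᵢ + ℂuᵢ)^⊥. Suppose 𝔥 ⊆ End(V) is a Lie subalgebra (commutator bracket) containing T_{uᵢ,w} for every w ∈ Wᵢ and both i = 1, 2. Then at least one of the following holds: (1) T_{u₁,u₂} ∈ 𝔥; (2) there exists v ∈ u₂^⊥ with v ∉ W₂ such that T_{u₂,v} ∈ 𝔥. -/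

import Mathlib

/-- For a symmetric bilinear form `B` on `V` and vectors `a b : V`, the endomorphism
`x ↦ B(x,b)•a − B(x,a)•b`, which corresponds to `a ∧ b ∈ Λ²V ≅ so(V,B)`. -/
noncomputable def Tmap {K V : Type*} [CommRing K] [AddCommGroup V] [Module K V]
    (B : V →ₗ[K] V →ₗ[K] K) (a b : V) : Module.End K V :=
  (LinearMap.toSpanSingleton K V a).comp (B.flip b) -
    (LinearMap.toSpanSingleton K V b).comp (B.flip a)

attribute [local instance 100] LieRing.ofAssociativeRing

/-!
Choose `w ≠ 0` orthogonal to `L₁, L₂, u₁, u₂`, possible as `dim V ≥ 7 > 6`, so that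
`T_{u₁,w}, T_{u₂,w} ∈ 𝔥`. For `x ∈ W₂` the bracket `⁅T_{u₂,x}, T_{u₁,w}⁆` shows
`B(x,w) T_{u₁,u₂} - B(u₁,u₂) T_{x,w} ∈ 𝔥`. Taking `x = w` settles the case `B(w,w) ≠ 0`.
Otherwise, unless `w ∈ ℂ u₂` (when `T_{u₁,u₂}` is a multiple of `T_{u₁,w}`), the double
orthogonal `((L₂ + ℂ u₂)^⊥)^⊥ = L₂ + ℂ u₂` yields `x ∈ W₂` with `B(x,w) ≠ 0`, which settles
`B(u₁,u₂) = 0`. If `B(u₁,u₂) ≠ 0`, the symmetric element for some `y ∈ W₁` and the isotropy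
of `w` make the bracket of the two elements isolate `2 B(x,w) B(y,w) B(u₁,u₂) T_{u₁,u₂}`.
So the first alternative always holds.
-/

section Lie

variable {K V : Type*} [CommRing K] [AddCommGroup V] [Module K V] (B : LinearMap.BilinForm K V)

lemma Tmap_apply (a b x : V) : Tmap B a b x = B x b • a - B x a • b := by
  simp [Tmap, LinearMap.toSpanSingleton_apply]

@[simp]
lemma Tmap_self (a : V) : Tmap B a a = 0 := sub_self _

lemma Tmap_swap (a b : V) : Tmap B b a = -Tmap B a b := by
  simp [Tmap]

lemma Tmap_smul_right (a b : V) (c : K) : Tmap B a (c • b) = c • Tmap B a b := by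
  ext x
  simp only [Tmap_apply, map_smul, LinearMap.smul_apply, smul_eq_mul]
  module

variable {B} (hB : B.IsSymm)
include hB

lemma lie_Tmap_Tmap (a b c d : V) :
    ⁅Tmap B a b, Tmap B c d⁆ =
      B b c • Tmap B a d + B a d • Tmap B b c - B b d • Tmap B a c - B a c • Tmap B b d := by
  ext x
  simp only [Ring.lie_def, LinearMap.sub_apply, LinearMap.add_apply, LinearMap.smul_apply,
    Module.End.mul_apply, Tmap_apply, map_sub, map_smul]
  rw [hB.eq c b, hB.eq c a, hB.eq d b, hB.eq d a]
  module

lemma lie_Tmap_Tmap_of_apply_eq_zero {a b c d : V} (had : B a d = 0) (hbd : B b d = 0) :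
    ⁅Tmap B a b, Tmap B c d⁆ = B b c • Tmap B a d - B a c • Tmap B b d := by
  rw [lie_Tmap_Tmap hB, had, hbd]
  module

lemma lie_Tmap_Tmap_of_isotropic {a b w : V} (hw : B w w = 0) :
    ⁅Tmap B a w, Tmap B b w⁆ = B b w • Tmap B a w - B a w • Tmap B b w := by
  rw [lie_Tmap_Tmap hB, hw, Tmap_self, Tmap_swap B b w, hB.eq w b]
  module

variable (𝔥 : LieSubalgebra K (Module.End K V))

lemma smul_Tmap_sub_smul_Tmap_mem {u v w x : V} (hvw : B v w = 0) (hTvx : Tmap B v x ∈ 𝔥)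
    (hTuw : Tmap B u w ∈ 𝔥) (hTvw : Tmap B v w ∈ 𝔥) :
    B x w • Tmap B u v - B u v • Tmap B x w ∈ 𝔥 := by
  have key : B x w • Tmap B u v - B u v • Tmap B x w =
      ⁅Tmap B v x, Tmap B u w⁆ - B x u • Tmap B v w := by
    rw [lie_Tmap_Tmap hB, hvw, Tmap_swap B u v, hB.eq v u]
    module
  rw [key]
  exact 𝔥.sub_mem (𝔥.lie_mem hTvx hTuw) (𝔥.smul_mem _ hTvw)

lemma smul_Tmap_mem_of_isotropic {u v w x y : V} (huw : B u w = 0) (hvw : B v w = 0)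
    (hw : B w w = 0) (hTuw : Tmap B u w ∈ 𝔥) (hTvw : Tmap B v w ∈ 𝔥)
    (hTvx : Tmap B v x ∈ 𝔥) (hTuy : Tmap B u y ∈ 𝔥) :
    (2 * B x w * B y w * B u v) • Tmap B u v ∈ 𝔥 := by
  set T := Tmap B u v
  set X := Tmap B x w
  set Y := Tmap B y w
  set P := B x w • T - B u v • X
  set Q := B y w • Tmap B v u - B v u • Y
  have hP : P ∈ 𝔥 := smul_Tmap_sub_smul_Tmap_mem hB 𝔥 hvw hTvx hTuw hTvw
  have hQ : Q ∈ 𝔥 := smul_Tmap_sub_smul_Tmap_mem hB 𝔥 huw hTuy hTvw hTuw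
  have hTY : ⁅T, Y⁆ ∈ 𝔥 := by
    rw [lie_Tmap_Tmap_of_apply_eq_zero hB huw hvw]
    exact 𝔥.sub_mem (𝔥.smul_mem _ hTuw) (𝔥.smul_mem _ hTvw)
  have hTX : ⁅T, X⁆ ∈ 𝔥 := by
    rw [lie_Tmap_Tmap_of_apply_eq_zero hB huw hvw]
    exact 𝔥.sub_mem (𝔥.smul_mem _ hTuw) (𝔥.smul_mem _ hTvw)
  have hXY : ⁅X, Y⁆ = B y w • X - B x w • Y := lie_Tmap_Tmap_of_isotropic hB hw
  have hvu : Tmap B v u = -T := Tmap_swap B u v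
  have key : (2 * B x w * B y w * B u v) • T =
      ⁅P, Q⁆ + (B x w * B u v) • ⁅T, Y⁆ + (B u v * B y w) • ⁅T, X⁆
        + (B u v * B y w) • P - (B u v * B x w) • Q := by
    simp only [P, Q, hvu, hB.eq v u, sub_lie, lie_sub, smul_lie, lie_smul, lie_neg, lie_self,
      hXY, ← lie_skew T X]
    module
  rw [key]
  exact 𝔥.sub_mem (𝔥.add_mem (𝔥.add_mem (𝔥.add_mem (𝔥.lie_mem hP hQ) (𝔥.smul_mem _ hTY))
    (𝔥.smul_mem _ hTX)) (𝔥.smul_mem _ hP)) (𝔥.smul_mem _ hQ)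

end Lie

section Orthogonal

open Module LinearMap.BilinForm

variable {K V : Type*} [Field K] [AddCommGroup V] [Module K V] {B : LinearMap.BilinForm K V}

lemma apply_eq_zero_of_mem_orthogonal_sup_span_singleton (hB : B.IsSymm) {L : Submodule K V}
    {u x : V} (hx : x ∈ B.orthogonal (L ⊔ K ∙ u)) : B x u = 0 ∧ ∀ l ∈ L, B x l = 0 :=
  ⟨hB.eq u x ▸ hx u (Submodule.mem_sup_right (Submodule.mem_span_singleton_self u)),
    fun l hl => hB.eq l x ▸ hx l (Submodule.mem_sup_left hl)⟩

variable [FiniteDimensional K V]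

lemma finrank_sup_span_singleton_le (L : Submodule K V) (u : V) :
    finrank K ↥(L ⊔ K ∙ u) ≤ finrank K L + 1 := by
  refine (Submodule.finrank_add_le_finrank_add_finrank _ _).trans (Nat.add_le_add_left ?_ _)
  simpa using finrank_span_le_card ({u} : Set V)

lemma exists_ne_zero_mem_orthogonal (hB : B.Nondegenerate) (U : Submodule K V)
    (hU : finrank K U < finrank K V) : ∃ w ∈ B.orthogonal U, w ≠ 0 := by
  refine Submodule.exists_mem_ne_zero_of_ne_bot (Submodule.one_le_finrank_iff.mp ?_)
  rw [finrank_orthogonal hB]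
  omega

lemma exists_mem_orthogonal_sup_apply_ne_zero (hB : B.IsSymm) (hBnd : B.Nondegenerate)
    {L : Submodule K V} (hL : ∀ l ∈ L, (∀ l' ∈ L, B l l' = 0) → l = 0) {u w : V}
    (huL : ∀ l ∈ L, B u l = 0) (hwL : w ∈ B.orthogonal L) (hwu : w ∉ K ∙ u) :
    ∃ x ∈ B.orthogonal (L ⊔ K ∙ u), B x w ≠ 0 := by
  by_contra! h
  have hw : w ∈ L ⊔ K ∙ u := by
    rw [← orthogonal_orthogonal hBnd hB.isRefl (L ⊔ K ∙ u)]
    exact h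
  obtain ⟨l, hl, v, hv, rfl⟩ := Submodule.mem_sup.mp hw
  obtain ⟨c, rfl⟩ := Submodule.mem_span_singleton.mp hv
  have hl0 : l = 0 := hL l hl fun l' hl' => by
    simpa [hB.eq l', huL l' hl'] using hwL l' hl'
  exact hwu (hl0 ▸ by simpa using Submodule.smul_mem _ c (Submodule.mem_span_singleton_self u))

theorem Tmap_mem_of_ne_zero_mem_orthogonal [NeZero (2 : K)] (hB : B.IsSymm) (hBnd : B.Nondegenerate)
    {L₁ L₂ : Submodule K V} (hL₁ : ∀ l ∈ L₁, (∀ l' ∈ L₁, B l l' = 0) → l = 0)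
    (hL₂ : ∀ l ∈ L₂, (∀ l' ∈ L₂, B l l' = 0) → l = 0) {u₁ u₂ : V}
    (hu₁L : ∀ l ∈ L₁, B u₁ l = 0) (hu₂L : ∀ l ∈ L₂, B u₂ l = 0)
    (𝔥 : LieSubalgebra K (Module.End K V))
    (hW₁ : ∀ x ∈ B.orthogonal (L₁ ⊔ K ∙ u₁), Tmap B u₁ x ∈ 𝔥)
    (hW₂ : ∀ x ∈ B.orthogonal (L₂ ⊔ K ∙ u₂), Tmap B u₂ x ∈ 𝔥) {w : V}
    (hw₁ : w ∈ B.orthogonal (L₁ ⊔ K ∙ u₁)) (hw₂ : w ∈ B.orthogonal (L₂ ⊔ K ∙ u₂)) (hw0 : w ≠ 0) :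
    Tmap B u₁ u₂ ∈ 𝔥 := by
  have hu₁w : B u₁ w = 0 := hw₁ u₁ (Submodule.mem_sup_right (Submodule.mem_span_singleton_self _))
  have hu₂w : B u₂ w = 0 := hw₂ u₂ (Submodule.mem_sup_right (Submodule.mem_span_singleton_self _))
  obtain hww | hww := ne_or_eq (B w w) 0
  · refine 𝔥.toSubmodule.smul_mem_iff hww |>.mp ?_
    simpa using smul_Tmap_sub_smul_Tmap_mem hB 𝔥 hu₂w (hW₂ w hw₂) (hW₁ w hw₁) (hW₂ w hw₂)
  by_cases hwu₂ : w ∈ K ∙ u₂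
  · obtain ⟨c, rfl⟩ := Submodule.mem_span_singleton.mp hwu₂
    have hc : c ≠ 0 := by rintro rfl; simp at hw0
    exact 𝔥.toSubmodule.smul_mem_iff hc |>.mp (Tmap_smul_right B u₁ u₂ c ▸ hW₁ _ hw₁)
  obtain ⟨x, hx, hxw⟩ := exists_mem_orthogonal_sup_apply_ne_zero hB hBnd hL₂ hu₂L
    (orthogonal_le le_sup_left hw₂) hwu₂
  by_cases hβ : B u₁ u₂ = 0
  · have hP := smul_Tmap_sub_smul_Tmap_mem hB 𝔥 hu₂w (hW₂ x hx) (hW₁ w hw₁) (hW₂ w hw₂)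
    rw [hβ, zero_smul, sub_zero] at hP
    exact 𝔥.toSubmodule.smul_mem_iff hxw |>.mp hP
  have hwu₁ : w ∉ K ∙ u₁ := by
    intro h
    obtain ⟨c, rfl⟩ := Submodule.mem_span_singleton.mp h
    have hc : c ≠ 0 := by rintro rfl; simp at hw0
    rw [map_smul, smul_eq_mul, hB.eq u₂ u₁] at hu₂w
    exact mul_ne_zero hc hβ hu₂w
  obtain ⟨y, hy, hyw⟩ := exists_mem_orthogonal_sup_apply_ne_zero hB hBnd hL₁ hu₁L
    (orthogonal_le le_sup_left hw₁) hwu₁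
  exact 𝔥.toSubmodule.smul_mem_iff (by simp [hxw, hyw, hβ, two_ne_zero]) |>.mp <|
    smul_Tmap_mem_of_isotropic hB 𝔥 hu₁w hu₂w hww (hW₁ w hw₁) (hW₂ w hw₂) (hW₂ x hx) (hW₁ y hy)

end Orthogonal

theorem stmt4_general (V : Type*) [AddCommGroup V] [Module ℂ V] [FiniteDimensional ℂ V]
    (hd : 7 ≤ Module.finrank ℂ V)
    (B : V →ₗ[ℂ] V →ₗ[ℂ] ℂ) (hsymm : ∀ x y : V, B x y = B y x)
    (hnd : ∀ x : V, (∀ y : V, B x y = 0) → x = 0)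
    (L₁ L₂ : Submodule ℂ V)
    (hL₁ : Module.finrank ℂ L₁ = 2) (hL₂ : Module.finrank ℂ L₂ = 2)
    -- `B` restricts nondegenerately to `L₁` and `L₂`
    (hL₁nd : ∀ l ∈ L₁, (∀ l' ∈ L₁, B l l' = 0) → l = 0)
    (hL₂nd : ∀ l ∈ L₂, (∀ l' ∈ L₂, B l l' = 0) → l = 0)
    (u₁ u₂ : V)
    (hu₁L : ∀ l ∈ L₁, B u₁ l = 0) (hu₂L : ∀ l ∈ L₂, B u₂ l = 0)
    (𝔥 : LieSubalgebra ℂ (Module.End ℂ V))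
    -- `Wᵢ = (Lᵢ + ℂuᵢ)^⊥`: the elements orthogonal to `uᵢ` and to all of `Lᵢ`
    (h₁ : ∀ w : V, B w u₁ = 0 → (∀ l ∈ L₁, B w l = 0) → Tmap B u₁ w ∈ 𝔥)
    (h₂ : ∀ w : V, B w u₂ = 0 → (∀ l ∈ L₂, B w l = 0) → Tmap B u₂ w ∈ 𝔥) :
    Tmap B u₁ u₂ ∈ 𝔥 ∨
      ∃ v : V, B v u₂ = 0 ∧ ¬ (∀ l ∈ L₂, B v l = 0) ∧ Tmap B u₂ v ∈ 𝔥 := by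
  have hB : LinearMap.BilinForm.IsSymm B := ⟨hsymm⟩
  have hBnd : LinearMap.BilinForm.Nondegenerate B :=
    hB.isRefl.nondegenerate_iff_separatingLeft.mpr hnd
  obtain ⟨w, hw, hw0⟩ := exists_ne_zero_mem_orthogonal hBnd ((L₁ ⊔ ℂ ∙ u₁) ⊔ (L₂ ⊔ ℂ ∙ u₂)) <| by
    have := Submodule.finrank_add_le_finrank_add_finrank (L₁ ⊔ ℂ ∙ u₁) (L₂ ⊔ ℂ ∙ u₂)
    have := finrank_sup_span_singleton_le L₁ u₁
    have := finrank_sup_span_singleton_le L₂ u₂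
    omega
  refine Or.inl <| Tmap_mem_of_ne_zero_mem_orthogonal hB hBnd hL₁nd hL₂nd hu₁L hu₂L 𝔥
    (fun x hx => (apply_eq_zero_of_mem_orthogonal_sup_span_singleton hB hx).elim (h₁ x))
    (fun x hx => (apply_eq_zero_of_mem_orthogonal_sup_span_singleton hB hx).elim (h₂ x))
    (LinearMap.BilinForm.orthogonal_le le_sup_left hw)
    (LinearMap.BilinForm.orthogonal_le le_sup_right hw) hw0

theorem stmt4 (V : Type*) [AddCommGroup V] [Module ℂ V] [FiniteDimensional ℂ V]
    (hd : 7 ≤ Module.finrank ℂ V)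
    (B : V →ₗ[ℂ] V →ₗ[ℂ] ℂ) (hsymm : ∀ x y : V, B x y = B y x)
    (hnd : ∀ x : V, (∀ y : V, B x y = 0) → x = 0)
    (L₁ L₂ : Submodule ℂ V)
    (hL₁ : Module.finrank ℂ L₁ = 2) (hL₂ : Module.finrank ℂ L₂ = 2)
    -- `B` restricts nondegenerately to `L₁` and `L₂`
    (hL₁nd : ∀ l ∈ L₁, (∀ l' ∈ L₁, B l l' = 0) → l = 0)
    (hL₂nd : ∀ l ∈ L₂, (∀ l' ∈ L₂, B l l' = 0) → l = 0)
    (u₁ u₂ : V) (hu₁ : u₁ ≠ 0) (hu₂ : u₂ ≠ 0)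
    (hiso₁ : B u₁ u₁ = 0) (hiso₂ : B u₂ u₂ = 0)
    (hu₁L : ∀ l ∈ L₁, B u₁ l = 0) (hu₂L : ∀ l ∈ L₂, B u₂ l = 0)
    (𝔥 : LieSubalgebra ℂ (Module.End ℂ V))
    -- `Wᵢ = (Lᵢ + ℂuᵢ)^⊥`: the elements orthogonal to `uᵢ` and to all of `Lᵢ`
    (h₁ : ∀ w : V, B w u₁ = 0 → (∀ l ∈ L₁, B w l = 0) → Tmap B u₁ w ∈ 𝔥)
    (h₂ : ∀ w : V, B w u₂ = 0 → (∀ l ∈ L₂, B w l = 0) → Tmap B u₂ w ∈ 𝔥) :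
    Tmap B u₁ u₂ ∈ 𝔥 ∨
      ∃ v : V, B v u₂ = 0 ∧ ¬ (∀ l ∈ L₂, B v l = 0) ∧ Tmap B u₂ v ∈ 𝔥 :=
  stmt4_general V hd B hsymm hnd L₁ L₂ hL₁ hL₂ hL₁nd hL₂nd u₁ u₂ hu₁L hu₂L 𝔥 h₁ h₂
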